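/- Let Q be a ground Horn program and k ∈ ℕ. For every derivation tree T for an atom (p, a) in Q with dim(T) = d ≤ k, there exists a derivation tree T' for (p^{=d}, a) in Q^{≤k} whose erasure is T; moreover, for every e with d ≤ e ≤ k there exists a derivation tree for (p^{≤e}, a) in Q^{≤k} whose erasure is T. -/

import Mathlib

/-- A labeled tree: a node carries a label and a (possibly empty) list of children. -/
inductive LTree (L : Type) : Type where
  | node : L → List (LTree L) → LTree L

namespace LTree

/-- The tree dimension: `0` for a leaf; otherwise the maximum `m` of the children's
dimensions if exactly one child attains `m`, and `m + 1` otherwise. -/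
def dim {L : Type} : LTree L → ℕ
  | node _ ts =>
    let ds := ts.attach.map fun x => dim x.1
    if ds = [] then 0
    else
      let m := ds.foldr max 0
      if ds.count m = 1 then m else m + 1
termination_by t => sizeOf t
decreasing_by
  have := List.sizeOf_lt_of_mem x.2
  simp_wf
  omega

end LTree

/-- A ground atom: a predicate symbol together with an argument tuple. -/
abbrev GAtom (P A : Type) := P × A

/-- A ground Horn rule: a head atom together with a finite list of body atoms. -/
abbrev GRule (P A : Type) := GAtom P A × List (GAtom P A)

/-- An atom is derivable in a ground Horn program `Q` if it is the head of a rule of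
`Q` all of whose body atoms are derivable. -/
inductive Derivable {P A : Type} (Q : Set (GRule P A)) : GAtom P A → Prop
  | intro (r : GRule P A) (hr : r ∈ Q) (hb : ∀ b ∈ r.2, Derivable Q b) :
      Derivable Q r.1

/-- `IsDeriv Q h T` : `T` is a derivation tree for the atom `h` in `Q`: its root label
is a rule `(h, [b₁,…,b_r]) ∈ Q` and its `r` children are derivation trees for
`b₁,…,b_r` in `Q`, respectively. -/
inductive IsDeriv {P A : Type} (Q : Set (GRule P A)) :
    GAtom P A → LTree (GRule P A) → Prop
  | node (r : GRule P A) (ts : List (LTree (GRule P A))) :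
      r ∈ Q → List.Forall₂ (IsDeriv Q) r.2 ts → IsDeriv Q r.1 (.node r ts)

/-- Annotated predicate symbols: `eq p d` stands for `p^{=d}` and `le p d` for `p^{≤d}`. -/
inductive Ann (P : Type) : Type where
  | eq (p : P) (d : ℕ)
  | le (p : P) (d : ℕ)

/-- The at-most-`k`-dimension program `Q^{≤k}` of a ground Horn program `Q`. -/
def kdim {P A : Type} (Q : Set (GRule P A)) (k : ℕ) : Set (GRule (Ann P) A) :=
  { R |
    -- (1) facts
    (∃ p a, ((p, a), ([] : List (GAtom P A))) ∈ Q ∧ R = ((Ann.eq p 0, a), [])) ∨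
    -- (1) linear rules
    (∃ p a q b d, d ≤ k ∧ ((p, a), [(q, b)]) ∈ Q ∧
      R = ((Ann.eq p d, a), [(Ann.eq q d, b)])) ∨
    -- (2a)
    (∃ p a B d j, ((p, a), B) ∈ Q ∧ 1 < B.length ∧ 1 ≤ d ∧ d ≤ k ∧ j < B.length ∧
      R = ((Ann.eq p d, a),
        (B.zipIdx.map Prod.swap).map fun x =>
          (if x.1 = j then Ann.eq x.2.1 d else Ann.le x.2.1 (d - 1), x.2.2))) ∨
    -- (2b)
    (∃ p a B d j₁ j₂, ((p, a), B) ∈ Q ∧ 1 < B.length ∧ 1 ≤ d ∧ d ≤ k ∧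
      j₁ < j₂ ∧ j₂ < B.length ∧
      R = ((Ann.eq p d, a),
        (B.zipIdx.map Prod.swap).map fun x =>
          (if x.1 = j₁ ∨ x.1 = j₂ then Ann.eq x.2.1 (d - 1) else Ann.le x.2.1 (d - 1),
            x.2.2))) ∨
    -- (3) ε-rules
    (∃ p a d e, e ≤ d ∧ d ≤ k ∧ R = ((Ann.le p d, a), [(Ann.eq p e, a)])) }

/-- Erase the annotation of an annotated atom. -/
def eraseAtom {P A : Type} : GAtom (Ann P) A → GAtom P A
  | (.eq p _, a) => (p, a)
  | (.le p _, a) => (p, a)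

/-- Erase the annotations of an annotated rule. -/
def eraseRule {P A : Type} (r : GRule (Ann P) A) : GRule P A :=
  (eraseAtom r.1, r.2.map eraseAtom)

/-- A rule of `Q^{≤k}` is an ε-rule precisely when its head predicate carries a
`≤`-annotation. -/
def isEpsRule {P A : Type} (r : GRule (Ann P) A) : Bool :=
  match r.1.1 with
  | .le _ _ => true
  | .eq _ _ => false

/-- The erasure of a derivation tree of `Q^{≤k}`: an ε-rule node (recognisable by its
`≤`-annotated head, and having exactly one child) is replaced by the erasure of its
child; at every other node the annotations of the rule labelling it are erased and the
children are erased recursively, in order. -/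
def erase {P A : Type} : LTree (GRule (Ann P) A) → LTree (GRule P A)
  | .node r ts =>
    if h : isEpsRule r ∧ ts.length = 1 then
      erase (ts.head (by rcases h with ⟨-, h2⟩; exact List.ne_nil_of_length_pos (by omega)))
    else .node (eraseRule r) (ts.attach.map fun x => erase x.1)
termination_by t => sizeOf t
decreasing_by
  · simp_wf
    have := List.sizeOf_lt_of_mem (List.head_mem (l := ts)
      (by rcases h with ⟨-, h2⟩; exact List.ne_nil_of_length_pos (by omega)))
    omega
  · have := List.sizeOf_lt_of_mem x.2
    simp_wf
    omega

/-!
Induction on the derivation tree. At a node with at least two children let `m` be the largest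
dimension of a child. If exactly one child attains `m`, the node has dimension `m` and rule (2a)
applies, with that child lifted to `=m` and every other child, of dimension `< m`, lifted to
`≤ m - 1` through an ε-rule; otherwise two children attain `m`, the node has dimension `m + 1`
and rule (2b) applies. Nodes with at most one child use the rules (1), and the `≤ e` statement
follows from the `= d` one by a single ε-rule, which erasure removes.
-/

namespace LTree

variable {L : Type}

@[simp]
theorem dim_node_nil (r : L) : (node r []).dim = 0 := by
  simp [dim]

theorem dim_node_of_ne_nil (r : L) {ts : List (LTree L)} (hts : ts ≠ []) :
    (node r ts).dim =
      let m := (ts.map dim).foldr max 0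
      if (ts.map dim).count m = 1 then m else m + 1 := by
  rw [dim, List.attach_map_val (f := dim), if_neg (by simpa using hts)]

@[simp]
theorem dim_node_singleton (r : L) (t : LTree L) : (node r [t]).dim = t.dim := by
  simp [dim_node_of_ne_nil]

theorem exists_dim_node (r : L) {ts : List (LTree L)} (hts : 2 ≤ ts.length) :
    ∃ m, (∀ i (hi : i < ts.length), ts[i].dim ≤ m) ∧
      (((node r ts).dim = m ∧ 1 ≤ m ∧ ∃ j, ∃ hj : j < ts.length, ts[j].dim = m ∧
          ∀ i (hi : i < ts.length), i ≠ j → ts[i].dim < m) ∨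
        ((node r ts).dim = m + 1 ∧ ∃ j₁ j₂, ∃ (_ : j₁ < j₂) (hj₂ : j₂ < ts.length),
          ts[j₁].dim = m ∧ ts[j₂].dim = m)) := by
  set ds := ts.map dim
  set m := ds.foldr max 0
  have hts' : ts ≠ [] := List.ne_nil_of_length_pos (by omega)
  have hne : ds ≠ [] := mt List.map_eq_nil_iff.mp hts'
  have hle : ∀ i (hi : i < ts.length), ts[i].dim ≤ m := fun i hi =>
    List.le_max_of_le' 0 (List.mem_map_of_mem (List.getElem_mem hi)) le_rfl
  have hmem : m ∈ ds := List.maximum_mem (List.foldr_max_of_ne_nil hne).symm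
  have hdup : ∀ i j (hi : i < ts.length) (hj : j < ts.length), i < j →
      ts[i].dim = m → ts[j].dim = m → 2 ≤ ds.count m := fun i j hi hj hij him hjm =>
    List.duplicate_iff_two_le_count.mp <| List.duplicate_iff_exists_distinct_get.mpr
      ⟨⟨i, by simpa [ds]⟩, ⟨j, by simpa [ds]⟩, hij, by simp [ds, him], by simp [ds, hjm]⟩
  refine ⟨m, hle, ?_⟩
  rw [dim_node_of_ne_nil r hts']
  by_cases hc : ds.count m = 1
  · left
    obtain ⟨j, hj, hjm⟩ := List.mem_iff_getElem.mp hmem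
    simp only [ds, List.getElem_map, List.length_map] at hj hjm
    have hlt : ∀ i (hi : i < ts.length), i ≠ j → ts[i].dim < m := fun i hi hij =>
      (hle i hi).lt_of_ne fun him => by
        rcases Nat.lt_or_gt_of_ne hij with h | h
        · have := hdup i j hi hj h him hjm; omega
        · have := hdup j i hj hi h hjm him; omega
    refine ⟨if_pos hc, ?_, j, hj, hjm, hlt⟩
    have := hlt (if j = 0 then 1 else 0) (by split <;> omega) (by split <;> omega)
    omega
  · right
    have : 2 ≤ ds.count m := by have := List.count_pos_iff.mpr hmem; omega
    obtain ⟨⟨j₁, hj₁⟩, ⟨j₂, hj₂⟩, h12, hj₁m, hj₂m⟩ :=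
      List.duplicate_iff_exists_distinct_get.mp (List.duplicate_iff_two_le_count.mpr this)
    simp only [ds, List.length_map, List.get_eq_getElem, List.getElem_map] at hj₂ hj₁m hj₂m
    exact ⟨if_neg hc, j₁, j₂, h12, hj₂, hj₁m.symm, hj₂m.symm⟩

end LTree

theorem List.exists_forall₂_map {α β γ : Type*} {R : α → β → Prop} {f : β → γ}
    {l₁ : List α} {l₂ : List γ} (h : List.Forall₂ (fun a c => ∃ b, R a b ∧ f b = c) l₁ l₂) :
    ∃ l, List.Forall₂ R l₁ l ∧ l.map f = l₂ := by
  induction h with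
  | nil => exact ⟨[], .nil, rfl⟩
  | cons hac _ ih =>
    obtain ⟨b, hab, rfl⟩ := hac
    obtain ⟨l, hl, rfl⟩ := ih
    exact ⟨b :: l, .cons hab hl, rfl⟩

def Ann.base {P : Type} : Ann P → P
  | .eq p _ => p
  | .le p _ => p

section Lift

variable {P A : Type}

@[simp]
theorem eraseAtom_mk (x : Ann P) (a : A) : eraseAtom (x, a) = (x.base, a) := by
  cases x <;> rfl

theorem erase_node_eq (p : P) (d : ℕ) (a : A) (B : List (GAtom (Ann P) A))
    (ts : List (LTree (GRule (Ann P) A))) :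
    erase (.node ((Ann.eq p d, a), B) ts) =
      .node (eraseRule ((Ann.eq p d, a), B)) (ts.map erase) := by
  rw [erase]
  simp [isEpsRule]

theorem erase_node_le (p : P) (d : ℕ) (a : A) (B : List (GAtom (Ann P) A))
    (t : LTree (GRule (Ann P) A)) :
    erase (.node ((Ann.le p d, a), B) [t]) = erase t := by
  rw [erase]
  simp [isEpsRule]

def HasLift (R : Set (GRule (Ann P) A)) (h : GAtom (Ann P) A) (T : LTree (GRule P A)) : Prop :=
  ∃ T', IsDeriv R h T' ∧ erase T' = T

theorem HasLift.node {R : Set (GRule (Ann P) A)} {p : P} {d : ℕ} {a : A}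
    {B : List (GAtom (Ann P) A)} {ts : List (LTree (GRule P A))}
    (hr : ((Ann.eq p d, a), B) ∈ R) (hts : List.Forall₂ (HasLift R) B ts) :
    HasLift R (Ann.eq p d, a) (.node (eraseRule ((Ann.eq p d, a), B)) ts) := by
  obtain ⟨ts', hder, rfl⟩ := List.exists_forall₂_map hts
  exact ⟨_, .node _ ts' hr hder, erase_node_eq ..⟩

theorem HasLift.le_of_eq {Q : Set (GRule P A)} {k d e : ℕ} {p : P} {a : A}
    {T : LTree (GRule P A)} (h : HasLift (kdim Q k) (Ann.eq p d, a) T) (hde : d ≤ e)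
    (hek : e ≤ k) : HasLift (kdim Q k) (Ann.le p e, a) T := by
  obtain ⟨T', hT', rfl⟩ := h
  refine ⟨_, IsDeriv.node ((Ann.le p e, a), [(Ann.eq p d, a)]) [T'] ?_ (.cons hT' .nil),
    erase_node_le ..⟩
  exact Or.inr <| Or.inr <| Or.inr <| Or.inr ⟨p, a, e, d, hde, hek, rfl⟩

/-- Written so as to match the bodies of the rules (2a) and (2b) of `kdim` definitionally. -/
def annotateBody (g : ℕ → P → Ann P) (B : List (GAtom P A)) : List (GAtom (Ann P) A) :=
  (B.zipIdx.map Prod.swap).map fun x => (g x.1 x.2.1, x.2.2)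

@[simp]
theorem length_annotateBody (g : ℕ → P → Ann P) (B : List (GAtom P A)) :
    (annotateBody g B).length = B.length := by
  simp [annotateBody]

@[simp]
theorem getElem_annotateBody (g : ℕ → P → Ann P) (B : List (GAtom P A)) (i : ℕ)
    (hi : i < (annotateBody g B).length) :
    (annotateBody g B)[i] = (g i (B[i]'(by simpa using hi)).1, (B[i]'(by simpa using hi)).2) := by
  simp [annotateBody]

theorem hasLift_node_annotateBody {R : Set (GRule (Ann P) A)} {p : P} {d : ℕ} {a : A}
    {B : List (GAtom P A)} {ts : List (LTree (GRule P A))} {g : ℕ → P → Ann P}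
    (hg : ∀ i q, (g i q).base = q) (hr : ((Ann.eq p d, a), annotateBody g B) ∈ R)
    (hlen : B.length = ts.length)
    (hts : ∀ i (hi : i < B.length) (hi' : i < ts.length), HasLift R (g i B[i].1, B[i].2) ts[i]) :
    HasLift R (Ann.eq p d, a) (.node ((p, a), B) ts) := by
  have herase : eraseRule ((Ann.eq p d, a), annotateBody g B) = ((p, a), B) := by
    refine Prod.ext rfl (List.ext_getElem (by simp [eraseRule]) fun i _ _ => ?_)
    simp [eraseRule, hg]
  rw [← herase]
  refine HasLift.node hr (List.forall₂_iff_get.mpr ⟨by simpa using hlen, fun i hi hi' => ?_⟩)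
  simpa using hts i (by simpa using hi) hi'

variable {Q : Set (GRule P A)} {k : ℕ}

theorem hasLift_node_of_two_le_length {p : P} {a : A} {B : List (GAtom P A)}
    {ts : List (LTree (GRule P A))} (hr : ((p, a), B) ∈ Q) (hlen : B.length = ts.length)
    (h2 : 2 ≤ ts.length) (hk : (LTree.node ((p, a), B) ts).dim ≤ k)
    (ih : ∀ i (hB : i < B.length) (hi : i < ts.length), ts[i].dim ≤ k →
      HasLift (kdim Q k) (Ann.eq B[i].1 ts[i].dim, B[i].2) ts[i]) :
    HasLift (kdim Q k) (Ann.eq p (LTree.node ((p, a), B) ts).dim, a) (.node ((p, a), B) ts) := by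
  obtain ⟨m, hle, ⟨hdim, hm, j, hj, hjm, hlt⟩ | ⟨hdim, j₁, j₂, h12, hj₂, hj₁m, hj₂m⟩⟩ :=
    LTree.exists_dim_node ((p, a), B) h2
  · rw [hdim] at hk ⊢
    refine hasLift_node_annotateBody (g := fun i q => if i = j then .eq q m else .le q (m - 1))
      (fun i q => by split <;> rfl)
      (Or.inr <| Or.inr <| Or.inl ⟨p, a, B, m, j, hr, by omega, hm, hk, by omega, rfl⟩)
      hlen fun i hB hi => ?_
    split_ifs with hij
    · subst hij
      exact hjm ▸ ih i hB hi (hjm ▸ hk)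
    · have := hlt i hi hij
      exact (ih i hB hi (by omega)).le_of_eq (by omega) (by omega)
  · rw [hdim] at hk ⊢
    refine hasLift_node_annotateBody
      (g := fun i q => if i = j₁ ∨ i = j₂ then .eq q m else .le q m)
      (fun i q => by split <;> rfl)
      (Or.inr <| Or.inr <| Or.inr <| Or.inl
        ⟨p, a, B, m + 1, j₁, j₂, hr, by omega, by omega, hk, h12, by omega, rfl⟩)
      hlen fun i hB hi => ?_
    split_ifs with hij
    · obtain rfl | rfl := hij
      · exact hj₁m ▸ ih i hB hi (by omega)
      · exact hj₂m ▸ ih i hB hi (by omega)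
    · exact (ih i hB hi (by have := hle i hi; omega)).le_of_eq (hle i hi) (by omega)

theorem IsDeriv.hasLift_eq_dim :
    ∀ {T : LTree (GRule P A)} {h : GAtom P A}, IsDeriv Q h T → T.dim ≤ k →
      HasLift (kdim Q k) (Ann.eq h.1 T.dim, h.2) T
  | .node ((p, a), B) ts, h, hT, hk => by
    obtain ⟨rfl, hr, hder⟩ : (p, a) = h ∧ ((p, a), B) ∈ Q ∧ List.Forall₂ (IsDeriv Q) B ts := by
      cases hT; exact ⟨rfl, ‹_›, ‹_›⟩
    have hlen := hder.length_eq
    have ih : ∀ i (hB : i < B.length) (hi : i < ts.length), ts[i].dim ≤ k →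
        HasLift (kdim Q k) (Ann.eq B[i].1 ts[i].dim, B[i].2) ts[i] := fun i hB hi hik =>
      have := List.sizeOf_lt_of_mem (List.getElem_mem hi)
      IsDeriv.hasLift_eq_dim ((List.forall₂_iff_get.mp hder).2 i hB hi) hik
    rcases ts with _ | ⟨t, _ | ⟨t', ts⟩⟩
    · obtain rfl : B = [] := List.length_eq_zero_iff.mp hlen
      rw [LTree.dim_node_nil]
      exact hasLift_node_annotateBody (g := fun _ q => .eq q 0) (fun _ _ => rfl)
        (Or.inl ⟨p, a, hr, rfl⟩) rfl fun i hi => absurd hi (Nat.not_lt_zero i)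
    · obtain ⟨⟨q, b⟩, rfl⟩ := List.length_eq_one_iff.mp hlen
      simp only [LTree.dim_node_singleton] at hk ⊢
      exact hasLift_node_annotateBody (g := fun _ q => .eq q t.dim) (fun _ _ => rfl)
        (Or.inr <| Or.inl ⟨p, a, q, b, t.dim, hk, hr, rfl⟩) rfl
        fun | 0, _, _ => ih 0 (by simp) (by simp) hk
    · exact hasLift_node_of_two_le_length hr hlen (by simp) hk ih
termination_by T => T
decreasing_by simp_wf; omega

end Lift

/-- For every derivation tree `T` for an atom `(p, a)` in `Q` with `dim T = d ≤ k`,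
there exists a derivation tree `T'` for `(p^{=d}, a)` in `Q^{≤k}` whose erasure is
`T`; moreover, for every `e` with `d ≤ e ≤ k` there exists a derivation tree for
`(p^{≤e}, a)` in `Q^{≤k}` whose erasure is `T`. -/
theorem isDeriv_lift {P A : Type} (Q : Set (GRule P A)) (k : ℕ)
    (p : P) (a : A) (T : LTree (GRule P A))
    (hT : IsDeriv Q (p, a) T) (hdim : T.dim ≤ k) :
    (∃ T' : LTree (GRule (Ann P) A),
        IsDeriv (kdim Q k) (Ann.eq p T.dim, a) T' ∧ erase T' = T) ∧
    (∀ e, T.dim ≤ e → e ≤ k →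
      ∃ T' : LTree (GRule (Ann P) A),
        IsDeriv (kdim Q k) (Ann.le p e, a) T' ∧ erase T' = T) := by
  have hlift := hT.hasLift_eq_dim hdim
  exact ⟨hlift, fun e he hek => hlift.le_of_eq he hek⟩
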